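/- arXiv:q-alg/9503005 — 4 statements merged into one kernel-verified Lean document; each statement's English description precedes it below -/
import Mathlib

section
/- The canonical element of the Heisenberg double satisfies the pentagon relation. Concretely: define the matrix S indexed by (ι × ι) × (ι × ι) with entries S_{(a,b),(c,d)} = Σ_β m_{aβ}^c · μ_b^{βd}. For a matrix T on ι × ι and 1 ≤ i < j ≤ 3, let T_{ij} denote the matrix on ι × ι × ι acting as T on the i-th and j-th factors and as the identity on the remaining factor. Then S₁₂ · S₁₃ · S₂₃ = S₂₃ · S₁₂ as matrices on ι × ι × ι. -/
open Matrix BigOperators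

/-- For a matrix `T` on `ι × ι`, the matrix on `ι × ι × ι` acting as `T` on the
first and second factors and as the identity on the third. -/
def lift12 {k ι : Type*} [Semiring k] [DecidableEq ι]
    (T : Matrix (ι × ι) (ι × ι) k) : Matrix (ι × ι × ι) (ι × ι × ι) k :=
  Matrix.of fun p q =>
    T (p.1, p.2.1) (q.1, q.2.1) * (if p.2.2 = q.2.2 then 1 else 0)

/-- For a matrix `T` on `ι × ι`, the matrix on `ι × ι × ι` acting as `T` on the
first and third factors and as the identity on the second. -/
def lift13 {k ι : Type*} [Semiring k] [DecidableEq ι]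
    (T : Matrix (ι × ι) (ι × ι) k) : Matrix (ι × ι × ι) (ι × ι × ι) k :=
  Matrix.of fun p q =>
    T (p.1, p.2.2) (q.1, q.2.2) * (if p.2.1 = q.2.1 then 1 else 0)

/-- For a matrix `T` on `ι × ι`, the matrix on `ι × ι × ι` acting as `T` on the
second and third factors and as the identity on the first. -/
def lift23 {k ι : Type*} [Semiring k] [DecidableEq ι]
    (T : Matrix (ι × ι) (ι × ι) k) : Matrix (ι × ι × ι) (ι × ι × ι) k :=
  Matrix.of fun p q =>
    T (p.2.1, p.2.2) (q.2.1, q.2.2) * (if p.1 = q.1 then 1 else 0)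

/-- The canonical element `S = e_α ⊗ e^α` of the Heisenberg double of a bialgebra
with structure constants `m`, `μ`, realized in the adjoint representation, satisfies
the pentagon relation `S₁₂ S₁₃ S₂₃ = S₂₃ S₁₂`. -/
theorem heisenberg_double_canonical_element_pentagon
    {k ι : Type*} [CommRing k] [Fintype ι] [DecidableEq ι]
    (m μ : ι → ι → ι → k)
    (hassoc : ∀ α β γ δ, ∑ σ, m α β σ * m σ γ δ = ∑ σ, m β γ σ * m α σ δ)
    (hcoassoc : ∀ α β γ δ, ∑ σ, μ α σ δ * μ σ β γ = ∑ σ, μ α β σ * μ σ γ δ)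
    (hcompat : ∀ α β ρ σ, ∑ γ, m α β γ * μ γ ρ σ =
      ∑ ρ₁, ∑ σ₁, ∑ ρ₂, ∑ σ₂, μ α ρ₁ σ₁ * μ β ρ₂ σ₂ * m ρ₁ ρ₂ ρ * m σ₁ σ₂ σ)
    (S : Matrix (ι × ι) (ι × ι) k)
    (hS : ∀ a b c d, S (a, b) (c, d) = ∑ β, m a β c * μ b β d) :
    lift12 S * lift13 S * lift23 S = lift23 S * lift12 S := by
  ext ⟨a,b,c⟩ ⟨x,y,z⟩
  simp only [Matrix.mul_apply, lift12, lift13, lift23, Matrix.of_apply,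
    Fintype.sum_prod_type, mul_ite, mul_one, mul_zero, ite_mul, one_mul, zero_mul,
    Finset.sum_ite_irrel, Finset.sum_const_zero, Finset.sum_ite_eq,
    Finset.sum_ite_eq', Finset.mem_univ, if_true, hS]
  simp only [Finset.sum_mul, Finset.mul_sum]
  -- goal:
  -- ∑ u ∑ v ∑ w ∑ r ∑ q ∑ p, m a p r * μ b p u * (m r q x * μ c q v) * (m u w y * μ v w z)
  --  = ∑ γ ∑ r ∑ p, m b p γ * μ c p z * (m a r x * μ γ r y)
  -- move r innermost : u v w q p r
  conv_lhs => enter [2, u, 2, v, 2, w]; rw [Finset.sum_comm]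
  conv_lhs => enter [2, u, 2, v, 2, w, 2, q]; rw [Finset.sum_comm]
  -- contract r via hassoc
  have h1 : ∀ u v w q p : ι,
      (∑ r, m a p r * μ b p u * (m r q x * μ c q v) * (m u w y * μ v w z))
      = ∑ r, (μ b p u * m u w y) * (μ c q v * μ v w z) * (m p q r * m a r x) := by
    intro u v w q p
    calc (∑ r, m a p r * μ b p u * (m r q x * μ c q v) * (m u w y * μ v w z))
        = ∑ r, ((μ b p u * m u w y) * (μ c q v * μ v w z)) * (m a p r * m r q x) :=
          Finset.sum_congr rfl fun r _ => by ring
      _ = ((μ b p u * m u w y) * (μ c q v * μ v w z)) * ∑ r, m a p r * m r q x := by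
          rw [← Finset.mul_sum]
      _ = ((μ b p u * m u w y) * (μ c q v * μ v w z)) * ∑ r, m p q r * m a r x := by
          rw [hassoc]
      _ = ∑ r, (μ b p u * m u w y) * (μ c q v * μ v w z) * (m p q r * m a r x) := by
          rw [← Finset.mul_sum]
  simp only [h1]
  -- order: u v w q p r ; move v innermost : u w q p r v
  conv_lhs => enter [2, u]; rw [Finset.sum_comm]
  conv_lhs => enter [2, u, 2, w]; rw [Finset.sum_comm]
  conv_lhs => enter [2, u, 2, w, 2, q]; rw [Finset.sum_comm]
  conv_lhs => enter [2, u, 2, w, 2, q, 2, p]; rw [Finset.sum_comm]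
  -- contract v via hcoassoc
  have h2 : ∀ u w q p r : ι,
      (∑ v, (μ b p u * m u w y) * (μ c q v * μ v w z) * (m p q r * m a r x))
      = ∑ v, μ b p u * μ v q w * m p q r * m u w y * (m a r x * μ c v z) := by
    intro u w q p r
    calc (∑ v, (μ b p u * m u w y) * (μ c q v * μ v w z) * (m p q r * m a r x))
        = ∑ v, ((μ b p u * m u w y) * (m p q r * m a r x)) * (μ c q v * μ v w z) :=
          Finset.sum_congr rfl fun v _ => by ring
      _ = ((μ b p u * m u w y) * (m p q r * m a r x)) * ∑ v, μ c q v * μ v w z := by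
          rw [← Finset.mul_sum]
      _ = ((μ b p u * m u w y) * (m p q r * m a r x)) * ∑ v, μ c v z * μ v q w := by
          rw [← hcoassoc]
      _ = ∑ v, μ b p u * μ v q w * m p q r * m u w y * (m a r x * μ c v z) := by
          rw [Finset.mul_sum]; exact Finset.sum_congr rfl fun v _ => by ring
  simp only [h2]
  -- order: u w q p r v ; permute to v r p u q w
  -- bubble v to front
  conv_lhs => enter [2, u, 2, w, 2, q, 2, p]; rw [Finset.sum_comm]
  conv_lhs => enter [2, u, 2, w, 2, q]; rw [Finset.sum_comm]
  conv_lhs => enter [2, u, 2, w]; rw [Finset.sum_comm]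
  conv_lhs => enter [2, u]; rw [Finset.sum_comm]
  conv_lhs => rw [Finset.sum_comm]
  -- order: v u w q p r ; bubble r to position 2
  conv_lhs => enter [2, v, 2, u, 2, w, 2, q]; rw [Finset.sum_comm]
  conv_lhs => enter [2, v, 2, u, 2, w]; rw [Finset.sum_comm]
  conv_lhs => enter [2, v, 2, u]; rw [Finset.sum_comm]
  conv_lhs => enter [2, v]; rw [Finset.sum_comm]
  -- order: v r u w q p ; rearrange u w q p -> p u q w
  conv_lhs => enter [2, v, 2, r, 2, u, 2, w]; rw [Finset.sum_comm]
  conv_lhs => enter [2, v, 2, r, 2, u]; rw [Finset.sum_comm]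
  conv_lhs => enter [2, v, 2, r]; rw [Finset.sum_comm]
  conv_lhs => enter [2, v, 2, r, 2, p, 2, u]; rw [Finset.sum_comm]
  -- order: v r p u q w ; contract p u q w via hcompat
  have h3 : ∀ v r : ι,
      (∑ p, ∑ u, ∑ q, ∑ w, μ b p u * μ v q w * m p q r * m u w y * (m a r x * μ c v z))
      = ∑ γ, m b v γ * μ γ r y * (m a r x * μ c v z) := by
    intro v r
    calc (∑ p, ∑ u, ∑ q, ∑ w, μ b p u * μ v q w * m p q r * m u w y * (m a r x * μ c v z))
        = (∑ p, ∑ u, ∑ q, ∑ w, μ b p u * μ v q w * m p q r * m u w y) * (m a r x * μ c v z) := by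
          simp only [← Finset.sum_mul]
      _ = (∑ γ, m b v γ * μ γ r y) * (m a r x * μ c v z) := by rw [← hcompat]
      _ = ∑ γ, m b v γ * μ γ r y * (m a r x * μ c v z) := Finset.sum_mul _ _ _
  simp only [h3]
  -- order: v r γ ; RHS is γ r v with leaf m b v γ * μ c v z * (m a r x * μ γ r y)
  conv_lhs => rw [Finset.sum_comm]
  conv_lhs => enter [2, r]; rw [Finset.sum_comm]
  conv_lhs => rw [Finset.sum_comm]
  exact Finset.sum_congr rfl fun g _ => Finset.sum_congr rfl fun r _ =>
    Finset.sum_congr rfl fun v _ => by ring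
end

section
/- The adjoint representation given by the structure constants realizes the mixed permutation relation of the Heisenberg double. Concretely: for each β ∈ ι define matrices M_β and N^β on ι × ι by (M_β)_{α,γ} = m_{αβ}^γ and (N^β)_{α,γ} = μ_α^{βγ}. Then for all α, β ∈ ι: M_α · N^β = Σ_{ρ,γ,σ} m_{ργ}^β · μ_α^{γσ} · N^ρ · M_σ. -/
open Matrix BigOperators

/-- The adjoint representation `(M_β)_{α,γ} = m_{αβ}^γ`, `(N^β)_{α,γ} = μ_α^{βγ}`
given by the structure constants of a bialgebra realizes the mixed permutation
relation of the Heisenberg double: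
`M_α · N^β = Σ_{ρ,γ,σ} m_{ργ}^β · μ_α^{γσ} · N^ρ · M_σ`. -/
theorem adjoint_rep_heisenberg_double_mixed_relation
    {k ι : Type*} [CommRing k] [Fintype ι]
    (m μ : ι → ι → ι → k)
    (hassoc : ∀ α β γ δ, ∑ σ, m α β σ * m σ γ δ = ∑ σ, m β γ σ * m α σ δ)
    (hcoassoc : ∀ α β γ δ, ∑ σ, μ α σ δ * μ σ β γ = ∑ σ, μ α β σ * μ σ γ δ)
    (hcompat : ∀ α β ρ σ, ∑ γ, m α β γ * μ γ ρ σ =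
      ∑ ρ₁, ∑ σ₁, ∑ ρ₂, ∑ σ₂, μ α ρ₁ σ₁ * μ β ρ₂ σ₂ * m ρ₁ ρ₂ ρ * m σ₁ σ₂ σ)
    (M N : ι → Matrix ι ι k)
    (hM : ∀ β α γ, M β α γ = m α β γ)
    (hN : ∀ β α γ, N β α γ = μ α β γ) :
    ∀ α β, M α * N β =
      ∑ ρ, ∑ γ, ∑ σ, (m ρ γ β * μ α γ σ) • (N ρ * M σ) := by
  intro α β
  ext x y
  simp only [Matrix.mul_apply, Matrix.sum_apply, Matrix.smul_apply, smul_eq_mul,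
    hM, hN, Finset.mul_sum]
  rw [hcompat x α β y]
  refine Finset.sum_congr rfl fun ρ _ => ?_
  rw [Finset.sum_comm]
  refine Finset.sum_congr rfl fun γ _ => ?_
  rw [Finset.sum_comm]
  refine Finset.sum_congr rfl fun σ _ => Finset.sum_congr rfl fun t _ => ?_
  ring
end

section
/- The Drinfeld double is realized inside the tensor product of the two Heisenberg doubles: the elements E_α := Σ_{β,γ} μ_α^{βγ} x_β y_γ and E^α := Σ_{β,γ} m_{γβ}^α x^β y^γ of D satisfy the Drinfeld double relations: E_α E_β = Σ_γ m_{αβ}^γ E_γ, E^α E^β = Σ_γ μ_γ^{αβ} E^γ, and Σ_{σ,γ,ρ} μ_α^{σγ} m_{γρ}^β E_σ E^ρ = Σ_{ρ,γ,σ} m_{ργ}^β μ_α^{γσ} E^ρ E_σ for all α, β. -/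
open BigOperators

section DrinfeldAux

theorem dd_sum6_congr {M ι : Type*} [AddCommMonoid M] [Fintype ι]
    (f g : ι → ι → ι → ι → ι → ι → M)
    (h : ∀ x1 x2 x3 x4 x5 x6, f x1 x2 x3 x4 x5 x6 = g x1 x2 x3 x4 x5 x6) :
    (∑ x1, ∑ x2, ∑ x3, ∑ x4, ∑ x5, ∑ x6, f x1 x2 x3 x4 x5 x6)
      = ∑ x1, ∑ x2, ∑ x3, ∑ x4, ∑ x5, ∑ x6, g x1 x2 x3 x4 x5 x6 :=
  Finset.sum_congr rfl fun x1 _ => Finset.sum_congr rfl fun x2 _ =>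
    Finset.sum_congr rfl fun x3 _ => Finset.sum_congr rfl fun x4 _ =>
    Finset.sum_congr rfl fun x5 _ => Finset.sum_congr rfl fun x6 _ => h x1 x2 x3 x4 x5 x6

section
variable {k ι : Type*} [CommRing k] [Fintype ι] {D : Type*} [Ring D] [Algebra k D]

theorem dd_mulExpand2 (F G : ι → ι → k) (U V : ι → ι → D) :
    (∑ b, ∑ c, F b c • U b c) * (∑ b, ∑ c, G b c • V b c)
      = ∑ b, ∑ c, ∑ b', ∑ c', (F b c * G b' c') • (U b c * V b' c') := by
  simp_rw [Finset.sum_mul, Finset.mul_sum, smul_mul_smul_comm]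

theorem dd_mulExpand1 (F G : ι → k) (U V : ι → D) :
    (∑ b, F b • U b) * (∑ c, G c • V c) = ∑ b, ∑ c, (F b * G c) • (U b * V c) := by
  simp_rw [Finset.sum_mul, Finset.mul_sum, smul_mul_smul_comm]

theorem dd_smulPull2 (x : k) (C : ι → ι → k) (w : ι → ι → D) :
    x • (∑ p, ∑ q, C p q • w p q) = ∑ p, ∑ q, (x * C p q) • w p q := by
  simp_rw [Finset.smul_sum, smul_smul]

theorem dd_pullT2 (C : ι → ι → ι → k) (w : ι → ι → D) :
    (∑ i, ∑ p, ∑ q, C i p q • w p q) = ∑ p, ∑ q, (∑ i, C i p q) • w p q := by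
  rw [Finset.sum_comm]
  refine Finset.sum_congr rfl fun p _ => ?_
  rw [Finset.sum_comm]
  exact Finset.sum_congr rfl fun q _ => Finset.sum_smul.symm

theorem dd_pullT4 (C : ι → ι → ι → ι → ι → k) (w : ι → ι → ι → ι → D) :
    (∑ i, ∑ p, ∑ q, ∑ r, ∑ s, C i p q r s • w p q r s)
      = ∑ p, ∑ q, ∑ r, ∑ s, (∑ i, C i p q r s) • w p q r s := by
  rw [Finset.sum_comm]
  refine Finset.sum_congr rfl fun p _ => ?_
  rw [Finset.sum_comm]
  refine Finset.sum_congr rfl fun q _ => ?_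
  rw [Finset.sum_comm]
  refine Finset.sum_congr rfl fun r _ => ?_
  rw [Finset.sum_comm]
  exact Finset.sum_congr rfl fun s _ => Finset.sum_smul.symm

end

theorem dd_scalar3 {k ι : Type*} [CommRing k] [Fintype ι] (m μ : ι → ι → ι → k)
    (hassoc : ∀ α β γ δ, ∑ σ, m α β σ * m σ γ δ = ∑ σ, m β γ σ * m α σ δ)
    (hcoassoc : ∀ α β γ δ, ∑ σ, μ α σ δ * μ σ β γ = ∑ σ, μ α β σ * μ σ γ δ)
    (α β a b c d : ι) :
    (∑ σ, ∑ γ, ∑ ρ, ∑ b₁, ∑ b₂, ∑ g,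
        μ α σ γ * m γ ρ β * μ σ b₁ c * m d b₂ ρ * m a g b₂ * μ b₁ g b)
    = ∑ ρ, ∑ γ, ∑ σ, ∑ c₂, ∑ c₁, ∑ g,
        m ρ γ β * μ α γ σ * m c₂ a ρ * μ σ b c₁ * μ c₁ c g * m g d c₂ := by
  -- h1: contract ρ
  have h1 : ∀ x1 x2 x3 x4 x5,
      (∑ ρ, μ α x1 x2 * m x2 ρ β * μ x1 x3 c * m d x4 ρ * m a x5 x4 * μ x3 x5 b)
      = ∑ t, μ α x1 x2 * μ x1 x3 c * m a x5 x4 * μ x3 x5 b * m x2 d t * m t x4 β := by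
    intro x1 x2 x3 x4 x5
    rw [show (∑ ρ, μ α x1 x2 * m x2 ρ β * μ x1 x3 c * m d x4 ρ * m a x5 x4 * μ x3 x5 b)
        = (μ α x1 x2 * μ x1 x3 c * m a x5 x4 * μ x3 x5 b) * ∑ ρ, m d x4 ρ * m x2 ρ β from by
      rw [Finset.mul_sum]; exact Finset.sum_congr rfl fun ρ _ => by ring]
    rw [show (∑ ρ, m d x4 ρ * m x2 ρ β) = ∑ t, m x2 d t * m t x4 β from (hassoc x2 d x4 β).symm]
    rw [Finset.mul_sum]
    exact Finset.sum_congr rfl fun t _ => by ring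
  have h2 : ∀ x1 x2 x3 x5 t,
      (∑ b₂, μ α x1 x2 * μ x1 x3 c * m a x5 b₂ * μ x3 x5 b * m x2 d t * m t b₂ β)
      = ∑ s, μ α x1 x2 * μ x1 x3 c * μ x3 x5 b * m x2 d t * m t a s * m s x5 β := by
    intro x1 x2 x3 x5 t
    rw [show (∑ b₂, μ α x1 x2 * μ x1 x3 c * m a x5 b₂ * μ x3 x5 b * m x2 d t * m t b₂ β)
        = (μ α x1 x2 * μ x1 x3 c * μ x3 x5 b * m x2 d t) * ∑ b₂, m a x5 b₂ * m t b₂ β from by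
      rw [Finset.mul_sum]; exact Finset.sum_congr rfl fun b₂ _ => by ring]
    rw [show (∑ b₂, m a x5 b₂ * m t b₂ β) = ∑ s, m t a s * m s x5 β from (hassoc t a x5 β).symm]
    rw [Finset.mul_sum]
    exact Finset.sum_congr rfl fun s _ => by ring
  have h3 : ∀ x2 x3 x5 t s,
      (∑ σ, μ α σ x2 * μ σ x3 c * μ x3 x5 b * m x2 d t * m t a s * m s x5 β)
      = ∑ v, μ x3 x5 b * m x2 d t * m t a s * m s x5 β * μ α x3 v * μ v c x2 := by
    intro x2 x3 x5 t s
    rw [show (∑ σ, μ α σ x2 * μ σ x3 c * μ x3 x5 b * m x2 d t * m t a s * m s x5 β)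
        = (μ x3 x5 b * m x2 d t * m t a s * m s x5 β) * ∑ σ, μ α σ x2 * μ σ x3 c from by
      rw [Finset.mul_sum]; exact Finset.sum_congr rfl fun σ _ => by ring]
    rw [hcoassoc α x3 c x2, Finset.mul_sum]
    exact Finset.sum_congr rfl fun v _ => by ring
  have h4 : ∀ x2 x5 t s v,
      (∑ b₁, μ b₁ x5 b * m x2 d t * m t a s * m s x5 β * μ α b₁ v * μ v c x2)
      = ∑ u, m x2 d t * m t a s * m s x5 β * μ v c x2 * μ α x5 u * μ u b v := by
    intro x2 x5 t s v
    rw [show (∑ b₁, μ b₁ x5 b * m x2 d t * m t a s * m s x5 β * μ α b₁ v * μ v c x2)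
        = (m x2 d t * m t a s * m s x5 β * μ v c x2) * ∑ b₁, μ α b₁ v * μ b₁ x5 b from by
      rw [Finset.mul_sum]; exact Finset.sum_congr rfl fun b₁ _ => by ring]
    rw [hcoassoc α x5 b v, Finset.mul_sum]
    exact Finset.sum_congr rfl fun u _ => by ring
  -- move ρ innermost: (σ γ ρ b₁ b₂ g) → (σ γ b₁ b₂ g ρ)
  conv_lhs => enter [2, x1, 2, x2]; rw [Finset.sum_comm]
  conv_lhs => enter [2, x1, 2, x2, 2, x3]; rw [Finset.sum_comm]
  conv_lhs => enter [2, x1, 2, x2, 2, x3, 2, x4]; rw [Finset.sum_comm]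
  conv_lhs => simp only [h1]
  -- (σ γ b₁ b₂ g t) → (σ γ b₁ g t b₂)
  conv_lhs => enter [2, x1, 2, x2, 2, x3]; rw [Finset.sum_comm]
  conv_lhs => enter [2, x1, 2, x2, 2, x3, 2, x4]; rw [Finset.sum_comm]
  conv_lhs => simp only [h2]
  -- (σ γ b₁ g t s) → (γ b₁ g t s σ)
  conv_lhs => rw [Finset.sum_comm]
  conv_lhs => enter [2, x1]; rw [Finset.sum_comm]
  conv_lhs => enter [2, x1, 2, x2]; rw [Finset.sum_comm]
  conv_lhs => enter [2, x1, 2, x2, 2, x3]; rw [Finset.sum_comm]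
  conv_lhs => enter [2, x1, 2, x2, 2, x3, 2, x4]; rw [Finset.sum_comm]
  conv_lhs => simp only [h3]
  -- (γ b₁ g t s v) → (γ g t s v b₁)
  conv_lhs => enter [2, x1]; rw [Finset.sum_comm]
  conv_lhs => enter [2, x1, 2, x2]; rw [Finset.sum_comm]
  conv_lhs => enter [2, x1, 2, x2, 2, x3]; rw [Finset.sum_comm]
  conv_lhs => enter [2, x1, 2, x2, 2, x3, 2, x4]; rw [Finset.sum_comm]
  conv_lhs => simp only [h4]
  -- now LHS: (γ g t s v u) of  m γ d t * m t a s * m s g β * μ v c γ * μ α g u * μ u b v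
  -- permute to (s g u t v γ)
  conv_lhs => enter [2, x1, 2, x2]; rw [Finset.sum_comm]        -- (t,s) d2
  conv_lhs => enter [2, x1]; rw [Finset.sum_comm]               -- (g,s) d1
  conv_lhs => rw [Finset.sum_comm]                              -- (γ,s) d0
  conv_lhs => enter [2, x1]; rw [Finset.sum_comm]               -- (γ,g) d1
  conv_lhs => enter [2, x1, 2, x2]; rw [Finset.sum_comm]        -- (γ,t) d2
  conv_lhs => enter [2, x1, 2, x2, 2, x3]; rw [Finset.sum_comm] -- (γ,v) d3
  conv_lhs => enter [2, x1, 2, x2, 2, x3, 2, x4]; rw [Finset.sum_comm] -- (γ,u) d4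
  conv_lhs => enter [2, x1, 2, x2, 2, x3]; rw [Finset.sum_comm] -- (v,u) d3
  conv_lhs => enter [2, x1, 2, x2]; rw [Finset.sum_comm]        -- (t,u) d2
  refine Finset.sum_congr rfl fun p1 _ => Finset.sum_congr rfl fun p2 _ =>
    Finset.sum_congr rfl fun p3 _ => Finset.sum_congr rfl fun p4 _ =>
    Finset.sum_congr rfl fun p5 _ => Finset.sum_congr rfl fun p6 _ => by ring

end DrinfeldAux

set_option maxHeartbeats 4000000 in
/-- The Drinfeld double realized inside the tensor product of two Heisenberg doubles:
the elements `E_α = Σ μ_α^{βγ} x_β y_γ` and `E^α = Σ m_{γβ}^α x^β y^γ` satisfy the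
defining relations of the Drinfeld double. -/
theorem drinfeld_double_in_heisenberg_squared
    {k ι : Type*} [CommRing k] [Fintype ι]
    (m μ : ι → ι → ι → k)
    (hassoc : ∀ α β γ δ, ∑ σ, m α β σ * m σ γ δ = ∑ σ, m β γ σ * m α σ δ)
    (hcoassoc : ∀ α β γ δ, ∑ σ, μ α σ δ * μ σ β γ = ∑ σ, μ α β σ * μ σ γ δ)
    (hcompat : ∀ α β ρ σ, ∑ γ, m α β γ * μ γ ρ σ =
      ∑ ρ₁, ∑ σ₁, ∑ ρ₂, ∑ σ₂, μ α ρ₁ σ₁ * μ β ρ₂ σ₂ * m ρ₁ ρ₂ ρ * m σ₁ σ₂ σ)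
    {D : Type*} [Ring D] [Algebra k D]
    (xl xu yl yu : ι → D)
    -- Heisenberg double relations (2.2) for the x's:
    (hx1 : ∀ α β, xl α * xl β = ∑ γ, m α β γ • xl γ)
    (hx2 : ∀ α β, xu α * xu β = ∑ γ, μ γ α β • xu γ)
    (hx3 : ∀ α β, xl α * xu β =
      ∑ ρ, ∑ γ, ∑ σ, (m ρ γ β * μ α γ σ) • (xu ρ * xl σ))
    -- tilde Heisenberg double relations (3.1) for the y's:
    (hy1 : ∀ α β, yl α * yl β = ∑ γ, m α β γ • yl γ)
    (hy2 : ∀ α β, yu α * yu β = ∑ γ, μ γ α β • yu γ)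
    (hy3 : ∀ α β, yu β * yl α =
      ∑ σ, ∑ γ, ∑ ρ, (μ α σ γ * m γ ρ β) • (yl σ * yu ρ))
    -- the two Heisenberg doubles commute inside D:
    (hc1 : ∀ α β, Commute (xl α) (yl β))
    (hc2 : ∀ α β, Commute (xl α) (yu β))
    (hc3 : ∀ α β, Commute (xu α) (yl β))
    (hc4 : ∀ α β, Commute (xu α) (yu β))
    (E Ed : ι → D)
    (hE : ∀ α, E α = ∑ β, ∑ γ, μ α β γ • (xl β * yl γ))
    (hEd : ∀ α, Ed α = ∑ β, ∑ γ, m γ β α • (xu β * yu γ)) :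
    (∀ α β, E α * E β = ∑ γ, m α β γ • E γ) ∧
    (∀ α β, Ed α * Ed β = ∑ γ, μ γ α β • Ed γ) ∧
    (∀ α β, ∑ σ, ∑ γ, ∑ ρ, (μ α σ γ * m γ ρ β) • (E σ * Ed ρ) =
      ∑ ρ, ∑ γ, ∑ σ, (m ρ γ β * μ α γ σ) • (Ed ρ * E σ)) := by
  refine ⟨fun α β => ?_, fun α β => ?_, fun α β => ?_⟩
  · -- relation 1
    have word : ∀ b c b' c', (xl b * yl c) * (xl b' * yl c')
        = ∑ p, ∑ q, (m b b' p * m c c' q) • (xl p * yl q) := by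
      intro b c b' c'
      rw [(hc1 b' c).symm.mul_mul_mul_comm, hx1, hy1, dd_mulExpand1]
    simp only [hE]
    rw [dd_mulExpand2]
    simp_rw [word, dd_smulPull2, dd_pullT2]
    refine Finset.sum_congr rfl fun p _ => Finset.sum_congr rfl fun q _ => ?_
    congr 1
    rw [hcompat α β p q]
    refine Finset.sum_congr rfl fun b _ => Finset.sum_congr rfl fun c _ =>
      Finset.sum_congr rfl fun b' _ => Finset.sum_congr rfl fun c' _ => by ring
  · -- relation 2
    have word : ∀ b c b' c', (xu b * yu c) * (xu b' * yu c')
        = ∑ p, ∑ q, (μ p b b' * μ q c c') • (xu p * yu q) := by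
      intro b c b' c'
      rw [(hc4 b' c).symm.mul_mul_mul_comm, hx2, hy2, dd_mulExpand1]
    simp only [hEd]
    rw [dd_mulExpand2]
    simp_rw [word, dd_smulPull2, dd_pullT2]
    refine Finset.sum_congr rfl fun p _ => Finset.sum_congr rfl fun q _ => ?_
    congr 1
    have hr : (∑ γ, μ γ α β * m q p γ)
        = ∑ x1, ∑ x2, ∑ x3, ∑ x4, μ q x1 x2 * μ p x3 x4 * m x1 x3 α * m x2 x4 β := by
      rw [← hcompat q p α β]
      exact Finset.sum_congr rfl fun γ _ => mul_comm _ _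
    rw [hr]
    conv_lhs => rw [Finset.sum_comm]
    conv_lhs => enter [2, x, 2, y]; rw [Finset.sum_comm]
    conv_lhs => enter [2, x]; rw [Finset.sum_comm]
    refine Finset.sum_congr rfl fun x1 _ => Finset.sum_congr rfl fun x2 _ =>
      Finset.sum_congr rfl fun x3 _ => Finset.sum_congr rfl fun x4 _ => by ring
  · -- relation 3
    have wordL : ∀ b₁ c₁ b₂ c₂, (xl b₁ * yl c₁) * (xu b₂ * yu c₂)
        = ∑ p, ∑ q, (∑ g, m p g b₂ * μ b₁ g q) • ((xu p * xl q) * (yl c₁ * yu c₂)) := by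
      intro b₁ c₁ b₂ c₂
      calc (xl b₁ * yl c₁) * (xu b₂ * yu c₂)
          = (xl b₁ * xu b₂) * (yl c₁ * yu c₂) := (hc3 b₂ c₁).symm.mul_mul_mul_comm _ _
        _ = (∑ p, ∑ g, ∑ q, (m p g b₂ * μ b₁ g q) • (xu p * xl q)) * (yl c₁ * yu c₂) := by
            rw [hx3]
        _ = ∑ p, ∑ g, ∑ q, (m p g b₂ * μ b₁ g q) • ((xu p * xl q) * (yl c₁ * yu c₂)) := by
            simp_rw [Finset.sum_mul, smul_mul_assoc]
        _ = ∑ p, ∑ q, ∑ g, (m p g b₂ * μ b₁ g q) • ((xu p * xl q) * (yl c₁ * yu c₂)) :=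
            Finset.sum_congr rfl fun p _ => Finset.sum_comm
        _ = ∑ p, ∑ q, (∑ g, m p g b₂ * μ b₁ g q) • ((xu p * xl q) * (yl c₁ * yu c₂)) := by
            simp_rw [← Finset.sum_smul]
    have wordR : ∀ b₂ c₂ b₁ c₁, (xu b₂ * yu c₂) * (xl b₁ * yl c₁)
        = ∑ s, ∑ r, (∑ g, μ c₁ s g * m g r c₂) • ((xu b₂ * xl b₁) * (yl s * yu r)) := by
      intro b₂ c₂ b₁ c₁
      calc (xu b₂ * yu c₂) * (xl b₁ * yl c₁)
          = (xu b₂ * xl b₁) * (yu c₂ * yl c₁) := (hc2 b₁ c₂).symm.mul_mul_mul_comm _ _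
        _ = (xu b₂ * xl b₁) * (∑ s, ∑ g, ∑ r, (μ c₁ s g * m g r c₂) • (yl s * yu r)) := by
            rw [hy3]
        _ = ∑ s, ∑ g, ∑ r, (μ c₁ s g * m g r c₂) • ((xu b₂ * xl b₁) * (yl s * yu r)) := by
            simp_rw [Finset.mul_sum, mul_smul_comm]
        _ = ∑ s, ∑ r, ∑ g, (μ c₁ s g * m g r c₂) • ((xu b₂ * xl b₁) * (yl s * yu r)) :=
            Finset.sum_congr rfl fun s _ => Finset.sum_comm
        _ = ∑ s, ∑ r, (∑ g, μ c₁ s g * m g r c₂) • ((xu b₂ * xl b₁) * (yl s * yu r)) := by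
            simp_rw [← Finset.sum_smul]
    simp only [hE, hEd]
    simp_rw [dd_mulExpand2]
    simp_rw [wordL, wordR]
    simp_rw [Finset.smul_sum]
    simp_rw [smul_smul]
    -- LHS binders: σ γ ρ b₁ c₁ b₂ c₂ p q  →  σ γ ρ b₁ b₂ c₁ c₂ p q
    conv_lhs => enter [2, x1, 2, x2, 2, x3, 2, x4]; rw [Finset.sum_comm]
    -- RHS binders: ρ γ σ b₂ c₂ b₁ c₁ s r  →  ρ γ σ c₂ c₁ b₂ b₁ s r
    conv_rhs => enter [2, x1, 2, x2, 2, x3]; rw [Finset.sum_comm]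
    conv_rhs => enter [2, x1, 2, x2, 2, x3, 2, x4, 2, x5]; rw [Finset.sum_comm]
    conv_rhs => enter [2, x1, 2, x2, 2, x3, 2, x4]; rw [Finset.sum_comm]
    simp_rw [dd_pullT4]
    -- LHS word binders (c₁ c₂ p q) → (p q c₁ c₂)
    conv_lhs => enter [2, x1]; rw [Finset.sum_comm]
    conv_lhs => rw [Finset.sum_comm]
    conv_lhs => enter [2, x1, 2, x2]; rw [Finset.sum_comm]
    conv_lhs => enter [2, x1]; rw [Finset.sum_comm]
    refine Finset.sum_congr rfl fun a _ => Finset.sum_congr rfl fun b _ =>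
      Finset.sum_congr rfl fun c _ => Finset.sum_congr rfl fun d _ => ?_
    congr 1
    simp only [Finset.mul_sum]
    exact (dd_sum6_congr _ _ fun _ _ _ _ _ _ => by ring).trans
      ((dd_scalar3 m μ hassoc hcoassoc α β a b c d).trans
        (dd_sum6_congr _ _ fun _ _ _ _ _ _ => by ring))
end

section
/- In the q-deformed example, the element W = UV − qVU is central in the algebra generated by U and V: in the tensor cube A ⊗ A ⊗ A set U := 1 ⊗ E ⊗ F and V := E ⊗ F ⊗ 1 and W := U·V − q·(V·U). Then W = (1−q) · (E ⊗ (F·E + K) ⊗ F), and W commutes with both U and V: U·W = W·U and V·W = W·V. -/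
/-!
The relations make `F * E + K` commute with both `E` and `F`, and `E * F - q • (F * E)`
equals `(1 - q) • (F * E + K)`. Hence `W` is a multiple of the pure tensor
`E ⊗ (F * E + K) ⊗ F`, each of whose factors commutes with the corresponding factor of
`U = 1 ⊗ E ⊗ F` and of `V = E ⊗ F ⊗ 1`; pure tensors of pairwise commuting factors commute.
-/

open TensorProduct

section HeisenbergDouble

variable {R A : Type*} [CommRing R] [Ring A] [Algebra R A] {q : R} {E F K : A}

theorem mul_sub_smul_mul_eq (hEF : E * F - F * E = (1 - q) • K) :
    E * F - q • (F * E) = (1 - q) • (F * E + K) := by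
  rw [sub_eq_iff_eq_add'.mp hEF]
  module

theorem commute_E_FE_add_K (hEF : E * F - F * E = (1 - q) • K) (hEK : E * K = q • (K * E)) :
    Commute E (F * E + K) := by
  have hEFE : E * (F * E) = F * E * E + (1 - q) • (K * E) := by
    rw [← mul_assoc, sub_eq_iff_eq_add'.mp hEF, add_mul, smul_mul_assoc]
  show E * (F * E + K) = (F * E + K) * E
  rw [mul_add, add_mul, hEFE, hEK]
  module

theorem commute_F_FE_add_K (hEF : E * F - F * E = (1 - q) • K) (hKF : K * F = q • (F * K)) :
    Commute F (F * E + K) := by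
  have hFEF : F * E * F = F * (F * E) + (1 - q) • (F * K) := by
    rw [mul_assoc, sub_eq_iff_eq_add'.mp hEF, mul_add, mul_smul_comm]
  show F * (F * E + K) = (F * E + K) * F
  rw [mul_add, add_mul, hFEF, hKF]
  module

end HeisenbergDouble

/-- In the q-deformed example (Heisenberg double of the Borel subalgebra of
`U_q(sl(2))`, with `K = q^{-H}`), setting `U = 1 ⊗ E ⊗ F`, `V = E ⊗ F ⊗ 1` in the
tensor cube `A ⊗ A ⊗ A`, the element `W = UV - qVU` equals
`(1-q) • (E ⊗ (FE + K) ⊗ F)` and is central in the algebra generated by `U` and `V`. -/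
theorem q_deformed_W_central
    {R A : Type*} [CommRing R] [Ring A] [Algebra R A] (q : R) (E F K : A)
    (hEF : E * F - F * E = (1 - q) • K)
    (hEK : E * K = q • (K * E))
    (hKF : K * F = q • (F * K))
    (U V W : A ⊗[R] (A ⊗[R] A))
    (hU : U = (1 : A) ⊗ₜ[R] (E ⊗ₜ[R] F))
    (hV : V = E ⊗ₜ[R] (F ⊗ₜ[R] (1 : A)))
    (hW : W = U * V - q • (V * U)) :
    W = (1 - q) • (E ⊗ₜ[R] ((F * E + K) ⊗ₜ[R] F)) ∧
    U * W = W * U ∧ V * W = W * V := by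
  have hW' : W = (1 - q) • (E ⊗ₜ[R] ((F * E + K) ⊗ₜ[R] F)) := by
    rw [← tmul_smul, smul_tmul', ← mul_sub_smul_mul_eq hEF, sub_tmul, tmul_sub, ← smul_tmul',
      tmul_smul, hW, hU, hV]
    simp only [Algebra.TensorProduct.tmul_mul_tmul, one_mul, mul_one]
  refine ⟨hW', ?_, ?_⟩
  · rw [hU, hW']
    exact ((Commute.one_left E).tmul
      ((commute_E_FE_add_K hEF hEK).tmul (Commute.refl F))).smul_right _ |>.eq
  · rw [hV, hW']
    exact ((Commute.refl E).tmul
      ((commute_F_FE_add_K hEF hKF).tmul (Commute.one_left F))).smul_right _ |>.eq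
end
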